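/- arXiv:2601.06912 — 3 statements merged into one kernel-verified Lean document; each statement's English description precedes it below -/
import Mathlib

section
/- Let G be a d-regular finite simple graph on n vertices whose adjacency matrix has second-largest eigenvalue λ₂. Then for any U ⊆ V(G) with |U| = k, the number of edges inside U satisfies e(U) ≤ d k²/(2n) + λ₂ (k/2 − k²/(2n)). -/
/-!
Expand the indicator vector `x` of `U` in the orthonormal eigenbasis, with coefficients
`cᵢ = ⟪vᵢ, x⟫`. Then `2 e(U) = xᵀ A x = ∑ λᵢ cᵢ²` and `∑ cᵢ² = |x|² = k`, so
`2 e(U) ≤ λ₂ k + (d - λ₂) c₀²`. Either `λ₂ = d` and the last term vanishes, or every eigenvalue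
after the first is below `d`; then the eigenvectors `vᵢ`, `i ≠ 0`, are orthogonal to the
all-ones vector (an eigenvector for `d`), which is therefore a multiple of `v₀`, and
`c₀² = ⟪1, x⟫² / ⟪1, 1⟫ = k² / n`.
-/

open Matrix Finset

namespace Matrix

variable {ι : Type*} [Fintype ι] [DecidableEq ι] {v : ι → ι → ℝ}

theorem sum_dotProduct_smul_of_orthonormal
    (horth : ∀ i j, v i ⬝ᵥ v j = if i = j then 1 else 0) (x : ι → ℝ) :
    ∑ i, (v i ⬝ᵥ x) • v i = x := by
  have hrows : of v * (of v)ᵀ = 1 := by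
    ext i j
    simpa [mul_apply, one_apply, dotProduct] using horth i j
  -- a square matrix with orthonormal rows also has orthonormal columns
  have hcols : (of v)ᵀ * of v = 1 := mul_eq_one_comm.mp hrows
  calc ∑ i, (v i ⬝ᵥ x) • v i = (of v)ᵀ *ᵥ (of v *ᵥ x) := by
        ext j
        simp [mulVec, dotProduct, Finset.sum_apply, mul_comm]
    _ = x := by rw [mulVec_mulVec, hcols, one_mulVec]

theorem sum_dotProduct_mul_dotProduct_of_orthonormal
    (horth : ∀ i j, v i ⬝ᵥ v j = if i = j then 1 else 0) (x y : ι → ℝ) :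
    ∑ i, (v i ⬝ᵥ x) * (v i ⬝ᵥ y) = x ⬝ᵥ y := by
  conv_rhs => rw [← sum_dotProduct_smul_of_orthonormal horth x]
  simp [sum_dotProduct, smul_dotProduct]

theorem dotProduct_mulVec_eq_sum_mul_sq_of_orthonormal
    (horth : ∀ i j, v i ⬝ᵥ v j = if i = j then 1 else 0) {A : Matrix ι ι ℝ} {lam : ι → ℝ}
    (heig : ∀ i, A *ᵥ v i = lam i • v i) (x : ι → ℝ) :
    x ⬝ᵥ A *ᵥ x = ∑ i, lam i * (v i ⬝ᵥ x) ^ 2 := by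
  have hAx : A *ᵥ x = ∑ i, (lam i * (v i ⬝ᵥ x)) • v i := by
    conv_lhs => rw [← sum_dotProduct_smul_of_orthonormal horth x]
    simp only [mulVec_sum, mulVec_smul, heig, smul_smul, mul_comm]
  rw [hAx, dotProduct_sum]
  refine Finset.sum_congr rfl fun i _ => ?_
  rw [dotProduct_smul, smul_eq_mul, dotProduct_comm]
  ring

theorem sq_dotProduct_mul_dotProduct_self_of_orthonormal
    (horth : ∀ i j, v i ⬝ᵥ v j = if i = j then 1 else 0) {y : ι → ℝ} {i₀ : ι}
    (hy : ∀ i ≠ i₀, v i ⬝ᵥ y = 0) (x : ι → ℝ) :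
    (v i₀ ⬝ᵥ x) ^ 2 * (y ⬝ᵥ y) = (y ⬝ᵥ x) ^ 2 := by
  have hsingle : ∀ z, ∑ i, (v i ⬝ᵥ y) * (v i ⬝ᵥ z) = (v i₀ ⬝ᵥ y) * (v i₀ ⬝ᵥ z) := fun z =>
    Finset.sum_eq_single i₀ (fun i _ hi => by rw [hy i hi, zero_mul]) (by simp)
  rw [← sum_dotProduct_mul_dotProduct_of_orthonormal horth y y, hsingle,
    ← sum_dotProduct_mul_dotProduct_of_orthonormal horth y x, hsingle]
  ring

omit [DecidableEq ι] in
theorem IsSymm.sub_mul_dotProduct_eq_zero {R : Type*} [CommRing R] {A : Matrix ι ι R}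
    (hA : A.IsSymm) {u w : ι → R} {μ ν : R} (hu : A *ᵥ u = μ • u) (hw : A *ᵥ w = ν • w) :
    (μ - ν) * (w ⬝ᵥ u) = 0 := by
  have : w ⬝ᵥ A *ᵥ u = (A *ᵥ w) ⬝ᵥ u := by
    rw [dotProduct_mulVec, ← mulVec_transpose, hA.eq]
  rw [hu, hw, dotProduct_smul, smul_dotProduct, smul_eq_mul, smul_eq_mul] at this
  rw [sub_mul, this, sub_self]

end Matrix

theorem Finset.sum_mul_le_of_le_of_ne {ι : Type*} [Fintype ι] [DecidableEq ι] {c lam : ι → ℝ}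
    (hc : ∀ i, 0 ≤ c i) {i₀ : ι} {μ : ℝ} (hlam : ∀ i ≠ i₀, lam i ≤ μ) :
    ∑ i, lam i * c i ≤ μ * ∑ i, c i + (lam i₀ - μ) * c i₀ := by
  have hrest : ∑ i ∈ univ.erase i₀, (lam i - μ) * c i ≤ 0 :=
    sum_nonpos fun i hi => mul_nonpos_of_nonpos_of_nonneg
      (sub_nonpos.mpr (hlam i (ne_of_mem_erase hi))) (hc i)
  calc ∑ i, lam i * c i = μ * ∑ i, c i + ∑ i, (lam i - μ) * c i := by
        simp only [sub_mul, sum_sub_distrib, mul_sum]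
        ring
    _ = μ * ∑ i, c i + ((lam i₀ - μ) * c i₀ + ∑ i ∈ univ.erase i₀, (lam i - μ) * c i) := by
        rw [add_sum_erase univ (fun i => (lam i - μ) * c i) (mem_univ i₀)]
    _ ≤ μ * ∑ i, c i + (lam i₀ - μ) * c i₀ := by linarith

namespace SimpleGraph

variable {V : Type*} (G : SimpleGraph V) [DecidableRel G.Adj]

theorem two_mul_ncard_edgeSet_induce (U : Finset V) :
    2 * (G.induce (U : Set V)).edgeSet.ncard = ∑ u ∈ U, #{w ∈ U | G.Adj u w} := by
  classical
  rw [Set.ncard_eq_toFinset_card', ← edgeFinset, ← sum_degrees_eq_twice_card_edges,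
    ← sum_coe_sort U]
  refine Finset.sum_congr rfl fun u _ => ?_
  rw [← card_neighborFinset_eq_degree, ← card_map (Function.Embedding.subtype _)]
  congr 1
  ext w
  simp [and_comm]

theorem indicator_dotProduct_adjMatrix_mulVec_indicator [Fintype V] {α : Type*}
    [NonAssocSemiring α] (U : Finset V) :
    (U : Set V).indicator 1 ⬝ᵥ G.adjMatrix α *ᵥ (U : Set V).indicator 1
      = 2 * ((G.induce (U : Set V)).edgeSet.ncard : α) := by
  rw [← Nat.cast_ofNat, ← Nat.cast_mul, two_mul_ncard_edgeSet_induce, dotProduct_mulVec_adjMatrix]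
  classical
  simp [Set.indicator_apply, ← sum_filter, filter_inter]

variable {G} in
theorem IsRegularOfDegree.sq_dotProduct_mul_card_of_orthonormal [Fintype V] [DecidableEq V]
    {d : ℕ} (hreg : G.IsRegularOfDegree d) {v : V → V → ℝ} {lam : V → ℝ}
    (horth : ∀ i j, v i ⬝ᵥ v j = if i = j then 1 else 0)
    (heig : ∀ i, G.adjMatrix ℝ *ᵥ v i = lam i • v i) {i₀ : V} (hgap : ∀ i ≠ i₀, lam i < d)
    (x : V → ℝ) :
    (v i₀ ⬝ᵥ x) ^ 2 * Fintype.card V = (1 ⬝ᵥ x) ^ 2 := by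
  have hone : G.adjMatrix ℝ *ᵥ 1 = (d : ℝ) • 1 := by
    ext u
    simpa using adjMatrix_mulVec_const_apply_of_regular (a := (1 : ℝ)) hreg
  have hperp : ∀ i ≠ i₀, v i ⬝ᵥ 1 = 0 := fun i hi =>
    (mul_eq_zero.mp (G.isSymm_adjMatrix.sub_mul_dotProduct_eq_zero hone (heig i))).resolve_left
      (sub_ne_zero.mpr (hgap i hi).ne')
  simpa using sq_dotProduct_mul_dotProduct_self_of_orthonormal horth hperp x

end SimpleGraph

theorem stmt7 (n : ℕ) (hn : 1 < n) (G : SimpleGraph (Fin n)) [DecidableRel G.Adj]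
    (d : ℕ) (hreg : G.IsRegularOfDegree d)
    (v : Fin n → (Fin n → ℝ)) (lam : Fin n → ℝ)
    (heig : ∀ i, (G.adjMatrix ℝ).mulVec (v i) = lam i • v i)
    (horth : ∀ i j, dotProduct (v i) (v j) = if i = j then 1 else 0)
    (hmono : ∀ i j : Fin n, i ≤ j → lam j ≤ lam i)
    (hl1 : lam ⟨0, by omega⟩ = d)
    (U : Finset (Fin n)) (k : ℕ) (hU : U.card = k) :
    ((G.induce (↑U : Set (Fin n))).edgeSet.ncard : ℝ)
      ≤ d * k ^ 2 / (2 * n) + lam ⟨1, hn⟩ * (k / 2 - k ^ 2 / (2 * n)) := by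
  set x : Fin n → ℝ := (U : Set (Fin n)).indicator 1
  set i₀ : Fin n := ⟨0, by omega⟩
  set μ := lam ⟨1, hn⟩
  have hxx : x ⬝ᵥ x = k := by simp [x, dotProduct, Set.indicator_apply, ← hU]
  have hsum : ∑ i, x i = k := by simp [x, Set.indicator_apply, ← hU]
  have hgap : ∀ i ≠ i₀, lam i ≤ μ := fun i hi =>
    hmono _ _ (Fin.le_def.mpr (Nat.one_le_iff_ne_zero.mpr (Fin.val_ne_iff.mpr hi)))
  have hspec : 2 * ((G.induce (U : Set (Fin n))).edgeSet.ncard : ℝ)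
      ≤ μ * k + (d - μ) * (v i₀ ⬝ᵥ x) ^ 2 := by
    rw [← G.indicator_dotProduct_adjMatrix_mulVec_indicator U,
      dotProduct_mulVec_eq_sum_mul_sq_of_orthonormal horth heig, ← hxx,
      ← sum_dotProduct_mul_dotProduct_of_orthonormal horth x x, ← hl1]
    simpa only [sq] using sum_mul_le_of_le_of_ne (fun i => mul_self_nonneg _) hgap
  have hfirst : (d - μ) * (v i₀ ⬝ᵥ x) ^ 2 = (d - μ) * (k ^ 2 / n) := by
    rcases (hl1 ▸ hmono i₀ _ (Fin.le_def.mpr zero_le_one) : μ ≤ d).eq_or_lt with h | h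
    · rw [h, sub_self, zero_mul, zero_mul]
    · have := hreg.sq_dotProduct_mul_card_of_orthonormal horth heig
        (fun i hi => (hgap i hi).trans_lt h) x
      rw [Fintype.card_fin, one_dotProduct, hsum] at this
      rw [← this]
      field_simp
  calc _ ≤ (μ * k + (d - μ) * (k ^ 2 / n)) / 2 := by linarith
    _ = _ := by field_simp; ring
end

section
/- Let n, k, s be positive integers with 2s + 1 ≤ n and k ≥ s + 2. Then for every U ⊆ V(C_n^s) with |U| = k, e(U) ≤ C(k,2) − ((s+1)/2) · ⌊k/(s+1)⌋ · (⌊k/(s+1)⌋ − 1). -/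
/-- The s-th power of the cycle graph on `ZMod n`: `u ~ v` iff
`1 ≤ min((u-v) mod n, (v-u) mod n) ≤ s`. -/
def cyclePow (n s : ℕ) : SimpleGraph (ZMod n) :=
  SimpleGraph.fromRel (fun u v => min ((u - v).val) ((v - u).val) ≤ s)

/-!
Every vertex of `C_n^s` has at most `2s` neighbours, `u ± d` with `1 ≤ d ≤ s`, so a `k`-set
spans at most `ks` edges. Writing `q = ⌊k/(s+1)⌋`, the bound is just `C(k,2)` when `q ≤ 1`, and when
`q ≥ 2` the estimate `ks` is already below it: with `m = (s+1)q ≤ k`,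
`k(k-1-2s) ≥ m(m-1-2s) = (s+1)q((s+1)q-1-2s) ≥ (s+1)q(q-1)`.
-/

open Finset SimpleGraph

namespace SimpleGraph

variable {V : Type*} (G : SimpleGraph V)

lemma two_mul_card_edgeFinset_le_of_degree_le [Fintype V] [DecidableRel G.Adj] {d : ℕ}
    (h : ∀ v, G.degree v ≤ d) : 2 * #G.edgeFinset ≤ Fintype.card V * d := by
  rw [← sum_degrees_eq_twice_card_edges]
  exact (sum_le_card_nsmul _ _ _ fun v _ ↦ h v).trans_eq (by rw [card_univ, smul_eq_mul])

lemma degree_induce_le_card {U : Set V} {t : Finset V} (w : U)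
    [Fintype ((G.induce U).neighborSet w)] (h : G.neighborSet w ⊆ t) :
    (G.induce U).degree w ≤ #t := by
  rw [← card_neighborFinset_eq_degree]
  refine card_le_card_of_injOn Subtype.val (fun y hy ↦ h ?_) Subtype.val_injective.injOn
  simpa using hy

end SimpleGraph

lemma cyclePow_neighborSet_subset (n s : ℕ) [NeZero n] (u : ZMod n) :
    (cyclePow n s).neighborSet u ⊆
      ↑((Icc 1 s).image (fun d : ℕ ↦ u + d) ∪ (Icc 1 s).image (fun d : ℕ ↦ u - d)) := by
  intro v huv
  rw [mem_neighborSet, cyclePow, fromRel_adj] at huv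
  obtain ⟨hne, hle⟩ := huv
  have hpos : ∀ x : ZMod n, x ≠ 0 → 1 ≤ x.val := fun x hx ↦
    Nat.one_le_iff_ne_zero.2 ((ZMod.val_ne_zero x).2 hx)
  simp only [coe_union, coe_image, coe_Icc, Set.mem_union, Set.mem_image, Set.mem_Icc]
  rcases le_total (u - v).val (v - u).val with h | h
  · right
    refine ⟨(u - v).val, ⟨hpos _ (sub_ne_zero.2 hne), ?_⟩, by simp⟩
    rcases hle with hle | hle <;> omega
  · left
    refine ⟨(v - u).val, ⟨hpos _ (sub_ne_zero.2 hne.symm), ?_⟩, by simp⟩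
    rcases hle with hle | hle <;> omega

lemma cyclePow_induce_degree_le (n s : ℕ) [NeZero n] {U : Set (ZMod n)} (w : U)
    [Fintype (((cyclePow n s).induce U).neighborSet w)] :
    ((cyclePow n s).induce U).degree w ≤ 2 * s := by
  refine ((cyclePow n s).degree_induce_le_card w (cyclePow_neighborSet_subset n s w)).trans ?_
  refine (card_union_le _ _).trans ?_
  have := (card_image_le (s := Icc 1 s) (f := fun d : ℕ ↦ (w : ZMod n) + d)).trans_eq
    (Nat.card_Icc 1 s)
  have := (card_image_le (s := Icc 1 s) (f := fun d : ℕ ↦ (w : ZMod n) - d)).trans_eq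
    (Nat.card_Icc 1 s)
  omega

lemma mul_le_choose_two_sub_of_two_le_div (k s : ℕ) (hq : 2 ≤ k / (s + 1)) :
    (k * s : ℝ) ≤ k.choose 2 - ((s : ℝ) + 1) / 2 * ((k / (s + 1) : ℕ) : ℝ)
        * (((k / (s + 1) : ℕ) : ℝ) - 1) := by
  set q := k / (s + 1)
  have hqk : ((s : ℝ) + 1) * q ≤ k := by
    exact_mod_cast (Nat.mul_comm _ _).trans_le (Nat.div_mul_le_self k (s + 1))
  have hq' : (2 : ℝ) ≤ q := by exact_mod_cast hq
  have hfactor : (0 : ℝ) ≤ k + (s + 1) * q - 1 - 2 * s := by nlinarith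
  rw [Nat.cast_choose_two]
  nlinarith [mul_nonneg (sub_nonneg.2 hqk) hfactor,
    mul_nonneg (mul_nonneg (by positivity : (0 : ℝ) ≤ (s + 1) * q) s.cast_nonneg)
      (sub_nonneg.2 hq')]

lemma cast_le_choose_two_sub_of_le_mul {e k s : ℕ} (hchoose : e ≤ k.choose 2)
    (hmul : e ≤ k * s) :
    (e : ℝ) ≤ k.choose 2 - ((s : ℝ) + 1) / 2 * ((k / (s + 1) : ℕ) : ℝ)
        * (((k / (s + 1) : ℕ) : ℝ) - 1) := by
  rcases le_or_gt (k / (s + 1)) 1 with hq | hq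
  · have : ((k / (s + 1) : ℕ) : ℝ) * (((k / (s + 1) : ℕ) : ℝ) - 1) = 0 := by
      interval_cases k / (s + 1) <;> norm_num
    rw [mul_assoc, this, mul_zero, sub_zero]
    exact_mod_cast hchoose
  · exact le_trans (mod_cast hmul) (mul_le_choose_two_sub_of_two_le_div k s hq)

theorem stmt9_general (n s k : ℕ) [NeZero n]
    (U : Set (ZMod n)) (hU : U.ncard = k) :
    (((cyclePow n s).induce U).edgeSet.ncard : ℝ)
      ≤ (k.choose 2 : ℝ) - ((s : ℝ) + 1) / 2 * ((k / (s + 1) : ℕ) : ℝ)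
          * (((k / (s + 1) : ℕ) : ℝ) - 1) := by
  classical
  have := Fintype.ofFinite U
  set G := (cyclePow n s).induce U
  have hcard : Fintype.card U = k := by rw [← Nat.card_eq_fintype_card, Nat.card_coe_set_eq, hU]
  have hE : G.edgeSet.ncard = #G.edgeFinset := Set.ncard_eq_toFinset_card' _
  have hchoose : #G.edgeFinset ≤ k.choose 2 := hcard ▸ G.card_edgeFinset_le_card_choose_two
  have hdeg : 2 * #G.edgeFinset ≤ 2 * (k * s) := mul_left_comm k 2 s ▸
    hcard ▸ G.two_mul_card_edgeFinset_le_of_degree_le fun w ↦ cyclePow_induce_degree_le n s w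
  rw [hE]
  exact cast_le_choose_two_sub_of_le_mul hchoose (Nat.le_of_mul_le_mul_left hdeg two_pos)

theorem stmt9 (n s k : ℕ) [NeZero n] (hs : 0 < s) (hk : 0 < k)
    (h1 : 2 * s + 1 ≤ n) (h2 : s + 2 ≤ k)
    (U : Set (ZMod n)) (hU : U.ncard = k) :
    (((cyclePow n s).induce U).edgeSet.ncard : ℝ)
      ≤ (k.choose 2 : ℝ) - ((s : ℝ) + 1) / 2 * ((k / (s + 1) : ℕ) : ℝ)
          * (((k / (s + 1) : ℕ) : ℝ) - 1) :=
  stmt9_general n s k U hU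
end

section
/- Let G be a finite simple graph with clique number ω = ω(G) and let U ⊆ V(G) with |U| = k. Then the number of edges of the induced subgraph on U is at most C(k,2) − (ω/2) · ⌊k/ω⌋ · (⌊k/ω⌋ − 1). -/
/-!
The set `U` induces a `K_{ω+1}`-free graph on `k` vertices, so by Turán's theorem it has at most
as many edges as the Turán graph `T(k, ω)`. The non-edges of `T(k, ω)` are the pairs inside its
`ω` parts, each of size at least `q = ⌊k/ω⌋`, so at least `ω * C(q, 2) = ω/2 * q * (q - 1)` of
the `C(k, 2)` pairs are missing.
-/

open Finset SimpleGraph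

theorem Nat.add_choose_two (m n : ℕ) :
    (m + n).choose 2 = m.choose 2 + m * n + n.choose 2 := by
  have h : (((m + n).choose 2 : ℕ) : ℚ) = (m.choose 2 + m * n + n.choose 2 : ℕ) := by
    push_cast [Nat.cast_choose_two]
    ring
  exact_mod_cast h

namespace SimpleGraph

lemma card_edgeFinset_turanGraph_add_mul_choose_two_le {n r : ℕ} (hr : 0 < r) :
    #(turanGraph n r).edgeFinset + r * (n / r).choose 2 ≤ n.choose 2 := by
  induction n using Nat.strong_induction_on with
  | _ n ih =>
  rcases lt_or_ge n r with hnr | hrn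
  · rw [card_edgeFinset_turanGraph, Nat.mod_eq_of_lt hnr, Nat.div_eq_of_lt hnr]
    simp
  · -- `T(m + r, r)` is `T(m, r)` with one new vertex in each part.
    obtain ⟨m, rfl⟩ := Nat.exists_eq_add_of_le' hrn
    have ih_m := ih m (by omega)
    have hqm : m / r * r ≤ m := Nat.div_mul_le_self m r
    have hmr : m * (r - 1) + m = m * r := by
      rw [← Nat.mul_succ, Nat.succ_eq_add_one, Nat.sub_add_cancel hr]
    rw [card_edgeFinset_turanGraph_add, Nat.add_div_right _ hr, Nat.choose_succ_succ',
      Nat.choose_one_right, Nat.add_choose_two]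
    nlinarith

variable {V : Type*} [Fintype V] {G : SimpleGraph V} [DecidableRel G.Adj] {r : ℕ}

lemma CliqueFree.card_edgeFinset_le_turanGraph (hr : 0 < r) (cf : G.CliqueFree (r + 1)) :
    #G.edgeFinset ≤ #(turanGraph (Fintype.card V) r).edgeFinset := by
  obtain ⟨T, _, hT⟩ := exists_isTuranMaximal (V := V) hr
  rw [← hT.nonempty_iso_turanGraph.some.card_edgeFinset_eq]
  exact hT.2 cf

lemma CliqueFree.card_edgeFinset_add_mul_choose_two_le (cf : G.CliqueFree (r + 1)) :
    #G.edgeFinset + r * (Fintype.card V / r).choose 2 ≤ (Fintype.card V).choose 2 := by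
  rcases r.eq_zero_or_pos with rfl | hr
  · simpa using card_edgeFinset_le_card_choose_two
  · grw [cf.card_edgeFinset_le_turanGraph hr]
    exact card_edgeFinset_turanGraph_add_mul_choose_two_le hr

lemma cliqueFree_cliqueNum_add_one {α : Type*} [Finite α] (G : SimpleGraph α) :
    G.CliqueFree (G.cliqueNum + 1) := fun s hs ↦ by
  have := hs.isClique.card_le_cliqueNum
  rw [hs.card_eq] at this
  omega

end SimpleGraph

theorem stmt10 {V : Type*} [Fintype V] (G : SimpleGraph V)
    (U : Set V) (k : ℕ) (hU : U.ncard = k) :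
    ((G.induce U).edgeSet.ncard : ℝ)
      ≤ (k.choose 2 : ℝ) - (G.cliqueNum : ℝ) / 2 * ((k / G.cliqueNum : ℕ) : ℝ)
          * (((k / G.cliqueNum : ℕ) : ℝ) - 1) := by
  classical
  have hcard : Fintype.card U = k := by
    rw [← Nat.card_eq_fintype_card, Nat.card_coe_set_eq, hU]
  have cf : (G.induce U).CliqueFree (G.cliqueNum + 1) :=
    G.cliqueFree_cliqueNum_add_one.comap (Embedding.induce U).isContained
  have bound := cf.card_edgeFinset_add_mul_choose_two_le
  rw [hcard] at bound
  have bound_real := (Nat.cast_le (α := ℝ)).mpr bound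
  rw [Set.ncard_eq_toFinset_card', ← edgeFinset]
  push_cast [Nat.cast_choose_two] at bound_real ⊢
  linarith
end
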